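/- Convex-conjugate pair for f-weighted Rényi entropies: fix α ∈ (1,∞) and a normalized state ρ on Q⊗Q'⊗Ĉ classical on Ĉ with alphabet 𝒞̂. Define G_{α,ρ} : ℝ^{|𝒞̂|} → ℝ by G_{α,ρ}(f) = −H_α^{↑,f}(Q | Ĉ Q')_ρ = (α/(α−1)) log( Σ_{ĉ: ρ(ĉ)>0} ρ(ĉ) 2^{((α−1)/α)( f(ĉ) − H_α↑(Q|Q')_{ρ_{|ĉ}} )} ), and define G*_{α,ρ} : ℝ^{|𝒞̂|} → ℝ∪{+∞} by G*_{α,ρ}(λ) = (α/(α−1)) D(λ ‖ ρ_Ĉ) + Σ_{ĉ: ρ(ĉ)>0} λ(ĉ) H_α↑(Q|Q')_{ρ_{|ĉ}} if λ is a probability distribution on 𝒞̂, and G*_{α,ρ}(λ) = +∞ otherwise, where D is the Kullback–Leibler divergence (base 2, equal to +∞ if supp(λ) ⊄ supp(ρ_Ĉ)) and ρ_Ĉ is the distribution induced by ρ on Ĉ. Then G_{α,ρ} and G*_{α,ρ} are both convex, and each is the Legendre–Fenchel convex conjugate of the other. -/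

import Mathlib

open scoped BigOperators Kronecker ENNReal ComplexOrder Classical
open Matrix Filter

noncomputable section
namespace QIT

variable {A B C D A' B' : Type*}

/-- Real part of the trace. -/
def rtr [Fintype A] (M : Matrix A A ℂ) : ℝ := M.trace.re

/-- A (normalized) quantum state. -/
def IsState [Fintype A] (ρ : Matrix A A ℂ) : Prop := ρ.PosSemidef ∧ ρ.trace = 1

/-- Partial trace over the second tensor factor. -/
def ptrR [Fintype B] (ρ : Matrix (A × B) (A × B) ℂ) : Matrix A A ℂ :=
  Matrix.of fun i j => ∑ k, ρ (i, k) (j, k)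

/-- Partial trace over the first tensor factor. -/
def ptrL [Fintype A] (ρ : Matrix (A × B) (A × B) ℂ) : Matrix B B ℂ :=
  Matrix.of fun i j => ∑ k, ρ (k, i) (k, j)

/-- Real power of a Hermitian matrix (Moore–Penrose convention, `0 ^ p = 0` for `p ≠ 0`),
via the spectral decomposition.  Junk value `0` on non-Hermitian input. -/
def hpow [Fintype A] [DecidableEq A] (M : Matrix A A ℂ) (p : ℝ) : Matrix A A ℂ :=
  if h : M.IsHermitian then
    (h.eigenvectorUnitary : Matrix A A ℂ) *
      Matrix.diagonal (fun i => ((h.eigenvalues i ^ p : ℝ) : ℂ)) *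
      star (h.eigenvectorUnitary : Matrix A A ℂ)
  else 0

/-- Base-2 logarithm of a Hermitian matrix (`log 0 = 0` on the kernel). -/
def hlog [Fintype A] [DecidableEq A] (M : Matrix A A ℂ) : Matrix A A ℂ :=
  if h : M.IsHermitian then
    (h.eigenvectorUnitary : Matrix A A ℂ) *
      Matrix.diagonal (fun i => ((Real.logb 2 (h.eigenvalues i) : ℝ) : ℂ)) *
      star (h.eigenvectorUnitary : Matrix A A ℂ)
  else 0

/-- Support inclusion `supp ρ ⊆ supp σ` for positive semidefinite matrices,
phrased as inclusion of kernels. -/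
def SuppLE [Fintype A] (ρ σ : Matrix A A ℂ) : Prop :=
  ∀ v : A → ℂ, σ.mulVec v = 0 → ρ.mulVec v = 0

/-- Sandwiched Rényi divergence (base 2) with real parameter `α`; `α = 1` is the
Umegaki divergence.  The value is `⊤` when the support conditions fail. -/
def sandD [Fintype A] [DecidableEq A] (α : ℝ) (ρ σ : Matrix A A ℂ) : EReal :=
  if α = 1 then
    (if SuppLE ρ σ then (((rtr (ρ * (hlog ρ - hlog σ))) / rtr ρ : ℝ) : EReal) else ⊤)
  else if (α < 1 ∧ ρ * σ ≠ 0) ∨ SuppLE ρ σ then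
    (((1 / (α - 1)) * Real.logb 2
      (rtr (hpow (hpow σ ((1 - α) / (2 * α)) * ρ * hpow σ ((1 - α) / (2 * α))) α) / rtr ρ) : ℝ) : EReal)
  else ⊤

/-- Sandwiched Rényi divergence with extended parameter `α ∈ [0,∞]`; the boundary
values are defined by the corresponding limits. -/
def sandDE [Fintype A] [DecidableEq A] (α : ℝ≥0∞) (ρ σ : Matrix A A ℂ) : EReal :=
  if α = ⊤ then Filter.limsup (fun a : ℝ => sandD a ρ σ) Filter.atTop
  else if α = 0 then Filter.limsup (fun a : ℝ => sandD a ρ σ) (nhdsWithin 0 (Set.Ioi 0))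
  else sandD α.toReal ρ σ

/-- Conditional Rényi entropy `H_α(A|B)`. -/
def condH [Fintype A] [DecidableEq A] [Fintype B] [DecidableEq B]
    (α : ℝ≥0∞) (ρ : Matrix (A × B) (A × B) ℂ) : EReal :=
  - sandDE α ρ ((1 : Matrix A A ℂ) ⊗ₖ ptrL ρ)

/-- Conditional Rényi entropy `H_α↑(A|B)` (optimized over the conditioning state). -/
def condHup [Fintype A] [DecidableEq A] [Fintype B] [DecidableEq B]
    (α : ℝ≥0∞) (ρ : Matrix (A × B) (A × B) ℂ) : EReal :=
  ⨆ σ : {σ : Matrix B B ℂ // IsState σ}, - sandDE α ρ ((1 : Matrix A A ℂ) ⊗ₖ σ.1)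

/-- Choi matrix of a map on matrices. -/
def choi [Fintype A] [DecidableEq A] (Φ : Matrix A A ℂ → Matrix B B ℂ) :
    Matrix (A × B) (A × B) ℂ :=
  Matrix.of fun p q => Φ (Matrix.single p.1 q.1 1) p.2 q.2

/-- Linearity of a map on matrices. -/
def IsLin (Φ : Matrix A A ℂ → Matrix B B ℂ) : Prop :=
  ∀ (c : ℂ) (M N : Matrix A A ℂ), Φ (c • M + N) = c • Φ M + Φ N

/-- Completely positive map (linear with positive semidefinite Choi matrix). -/
def IsCPMap [Fintype A] [DecidableEq A] [Fintype B] (Φ : Matrix A A ℂ → Matrix B B ℂ) : Prop :=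
  IsLin Φ ∧ (choi Φ).PosSemidef

/-- Quantum channel: completely positive and trace preserving. -/
def IsCPTP [Fintype A] [DecidableEq A] [Fintype B]
    (Φ : Matrix A A ℂ → Matrix B B ℂ) : Prop :=
  IsCPMap Φ ∧ ∀ M, (Φ M).trace = M.trace

/-- Tensor product `Φ ⊗ Ψ` of (linear) maps on matrices, written out entrywise. -/
def kmap [Fintype A] [DecidableEq A] [Fintype C] [DecidableEq C]
    (Φ : Matrix A A ℂ → Matrix B B ℂ) (Ψ : Matrix C C ℂ → Matrix D D ℂ)
    (M : Matrix (A × C) (A × C) ℂ) : Matrix (B × D) (B × D) ℂ :=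
  Matrix.of fun p q => ∑ a : A, ∑ a' : A, ∑ c : C, ∑ c' : C,
    M (a, c) (a', c') * Φ (Matrix.single a a' 1) p.1 q.1 *
      Ψ (Matrix.single c c' 1) p.2 q.2

/-- Marginal-constrained Rényi channel conditional entropy `H_α↑(M, B, [ψ_A])` for a
channel `M ∈ CPTP(A⊗A', B⊗C)`, with stabilizing register `R̃ ≅ A⊗A'`. -/
def chanHup [Fintype A] [DecidableEq A] [Fintype A'] [DecidableEq A']
    [Fintype B] [DecidableEq B] [Fintype C] [DecidableEq C]
    (α : ℝ≥0∞) (M : Matrix (A × A') (A × A') ℂ → Matrix (B × C) (B × C) ℂ)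
    (ψ : Matrix A A ℂ) : EReal :=
  ⨅ ρ : {ρ : Matrix ((A × A') × (A × A')) ((A × A') × (A × A')) ℂ //
      IsState ρ ∧
      ptrR (Matrix.reindex (Equiv.prodAssoc A A' (A × A')) (Equiv.prodAssoc A A' (A × A')) ρ) = ψ},
    condHup α (Matrix.reindex (Equiv.prodAssoc B C (A × A')) (Equiv.prodAssoc B C (A × A'))
      (kmap M id ρ.1))

/-- Tensor power `ψ^{⊗m}` of a state. -/
def statePow [Fintype A] (ψ : Matrix A A ℂ) (m : ℕ) :
    Matrix (Fin m → A) (Fin m → A) ℂ :=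
  Matrix.of fun i j => ∏ k, ψ (i k) (j k)

/-- Tensor power `Φ^{⊗m}` of a (linear) map on matrices. -/
def funPow [Fintype A] [DecidableEq A] (Φ : Matrix A A ℂ → Matrix B B ℂ) (m : ℕ)
    (M : Matrix (Fin m → A) (Fin m → A) ℂ) : Matrix (Fin m → B) (Fin m → B) ℂ :=
  Matrix.of fun p q => ∑ a : Fin m → A, ∑ b : Fin m → A,
    M a b * ∏ i, Φ (Matrix.single (a i) (b i) 1) (p i) (q i)

/-- Tensor power of a channel between pairs of registers, with the factors regrouped
as `(A^m) × (A'^m) → (B^m) × (C^m)`. -/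
def chanPow [Fintype A] [DecidableEq A] [Fintype A'] [DecidableEq A']
    (Φ : Matrix (A × A') (A × A') ℂ → Matrix (B × C) (B × C) ℂ) (m : ℕ)
    (M : Matrix ((Fin m → A) × (Fin m → A')) ((Fin m → A) × (Fin m → A')) ℂ) :
    Matrix ((Fin m → B) × (Fin m → C)) ((Fin m → B) × (Fin m → C)) ℂ :=
  Matrix.reindex (Equiv.arrowProdEquivProdArrow (Fin m) (fun _ => B) (fun _ => C))
    (Equiv.arrowProdEquivProdArrow (Fin m) (fun _ => B) (fun _ => C))
    (funPow Φ m (Matrix.reindex (Equiv.arrowProdEquivProdArrow (Fin m) (fun _ => A) (fun _ => A')).symm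
      (Equiv.arrowProdEquivProdArrow (Fin m) (fun _ => A) (fun _ => A')).symm M))

/-- `2 ^ x` for `x : EReal`, valued in `ℝ≥0∞`. -/
def e2pow (x : EReal) : ℝ≥0∞ :=
  if x = ⊥ then 0 else if x = ⊤ then ⊤ else ENNReal.ofReal ((2 : ℝ) ^ x.toReal)

/-- Base-2 logarithm `ℝ≥0∞ → EReal`. -/
def elog2 (x : ℝ≥0∞) : EReal :=
  if x = 0 then ⊥ else if x = ⊤ then ⊤ else ((Real.logb 2 x.toReal : ℝ) : EReal)

/-- A matrix is classical along a labelling function `c` if it is block-diagonal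
with respect to the classical label. -/
def IsClassicalAlong {T K : Type*} (c : T → K) (ρ : Matrix T T ℂ) : Prop :=
  ∀ t t', c t ≠ c t' → ρ t t' = 0


section FWeighted

variable {Kb Kh Q Q' : Type*} [Fintype Kb] [DecidableEq Kb] [Fintype Kh] [DecidableEq Kh]
  [Fintype Q] [DecidableEq Q] [Fintype Q'] [DecidableEq Q']

/-- Joint weight `ρ(c̄,ĉ)` of the classical value `k = (c̄,ĉ)`. -/
def cwt (ρ : Matrix ((Kb × Kh) × (Q × Q')) ((Kb × Kh) × (Q × Q')) ℂ) (k : Kb × Kh) : ℝ :=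
  (∑ q : Q × Q', ρ (k, q) (k, q)).re

/-- Weight `ρ(ĉ)` of the classical value `ĉ`. -/
def hwt (ρ : Matrix ((Kb × Kh) × (Q × Q')) ((Kb × Kh) × (Q × Q')) ℂ) (h : Kh) : ℝ :=
  ∑ b : Kb, cwt ρ (b, h)

/-- Subnormalized block (partial state) on `Q × Q'` for classical value `k`. -/
def cblk (ρ : Matrix ((Kb × Kh) × (Q × Q')) ((Kb × Kh) × (Q × Q')) ℂ) (k : Kb × Kh) :
    Matrix (Q × Q') (Q × Q') ℂ :=
  Matrix.of fun q q' => ρ (k, q) (k, q')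

/-- Normalized conditional state on `Q × Q'` given classical value `k`. -/
def ccond (ρ : Matrix ((Kb × Kh) × (Q × Q')) ((Kb × Kh) × (Q × Q')) ℂ) (k : Kb × Kh) :
    Matrix (Q × Q') (Q × Q') ℂ :=
  ((cwt ρ k)⁻¹ : ℝ) • cblk ρ k

/-- Inner bracket of the `f`-weighted Rényi entropy:
`[ Σ_{c̄ : ρ(c̄|ĉ)>0} ρ(c̄|ĉ)^α 2^{(α−1)(f(c̄,ĉ)+D_α(ρ_{QQ'|c̄ĉ}‖1_Q⊗σ))} ]^{1/α}`. -/
def HfInner (α : ℝ) (f : Kb × Kh → ℝ)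
    (ρ : Matrix ((Kb × Kh) × (Q × Q')) ((Kb × Kh) × (Q × Q')) ℂ) (h : Kh)
    (σ : Matrix Q' Q' ℂ) : ℝ≥0∞ :=
  (∑ b : Kb, if cwt ρ (b, h) = 0 then 0 else
    ENNReal.ofReal ((cwt ρ (b, h) / hwt ρ h) ^ α) *
      e2pow (((α - 1 : ℝ) : EReal) * (((f (b, h) : ℝ) : EReal) +
        sandD α (ccond ρ (b, h)) ((1 : Matrix Q Q ℂ) ⊗ₖ σ)))) ^ (1 / α)

/-- `f`-weighted Rényi entropy `H_α^{↑,f}(Q C̄ | Ĉ Q')` for real parameter `α ≠ 1`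
(for `α > 1` the inner optimization is an infimum, for `α < 1` a supremum). -/
def HfR (α : ℝ) (f : Kb × Kh → ℝ)
    (ρ : Matrix ((Kb × Kh) × (Q × Q')) ((Kb × Kh) × (Q × Q')) ℂ) : EReal :=
  ((α / (1 - α) : ℝ) : EReal) * elog2 (∑ h : Kh,
    if hwt ρ h = 0 then 0 else ENNReal.ofReal (hwt ρ h) *
      (if 1 < α then ⨅ σ : {σ : Matrix Q' Q' ℂ // IsState σ}, HfInner α f ρ h σ.1
       else ⨆ σ : {σ : Matrix Q' Q' ℂ // IsState σ}, HfInner α f ρ h σ.1))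

/-- `f`-weighted Rényi entropy with extended parameter (the values at `α = 1, ∞` are
defined by the corresponding limits). -/
def Hf (α : ℝ≥0∞) (f : Kb × Kh → ℝ)
    (ρ : Matrix ((Kb × Kh) × (Q × Q')) ((Kb × Kh) × (Q × Q')) ℂ) : EReal :=
  if α = ⊤ then Filter.limsup (fun a : ℝ => HfR a f ρ) Filter.atTop
  else if α = 1 then Filter.limsup (fun a : ℝ => HfR a f ρ) (nhdsWithin 1 (Set.Ioi 1))
  else HfR α.toReal f ρ

end FWeighted

/-- Classical Rényi divergence of order `α` (base 2) between two (sub)distributions,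
`α = 1` being the Kullback–Leibler divergence. -/
def clD {X : Type*} [Fintype X] (α : ℝ) (p q : X → ℝ) : EReal :=
  if α = 1 then
    (if (∀ x, q x = 0 → p x = 0) then
      (((∑ x, if p x = 0 then 0 else p x * Real.logb 2 (p x / q x)) / ∑ x, p x : ℝ) : EReal)
     else ⊤)
  else if (α < 1 ∧ ∃ x, p x ≠ 0 ∧ q x ≠ 0) ∨ (∀ x, q x = 0 → p x = 0) then
    (((1 / (α - 1)) * Real.logb 2
      ((∑ x, if p x = 0 then 0 else p x ^ α * q x ^ (1 - α)) / ∑ x, p x) : ℝ) : EReal)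
  else ⊤

/-- Measured Rényi divergence: supremum over all finite-outcome POVMs of the
classical Rényi divergence of the induced outcome distributions. -/
def measD {A : Type*} [Fintype A] [DecidableEq A] (α : ℝ) (ρ σ : Matrix A A ℂ) : EReal :=
  ⨆ k : ℕ, ⨆ M : {M : Fin k → Matrix A A ℂ // (∀ x, (M x).PosSemidef) ∧ ∑ x, M x = 1},
    clD α (fun x => rtr (M.1 x * ρ)) (fun x => rtr (M.1 x * σ))


section Conjugate

variable {Kh Q Q' : Type*} [Fintype Kh] [DecidableEq Kh]
  [Fintype Q] [DecidableEq Q] [Fintype Q'] [DecidableEq Q']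

/-- Probability `ρ(ĉ)` of the classical value `ĉ` for a state on `Ĉ⊗(Q⊗Q')`. -/
def hprob (ρ : Matrix (Kh × (Q × Q')) (Kh × (Q × Q')) ℂ) (h : Kh) : ℝ :=
  (∑ q : Q × Q', ρ (h, q) (h, q)).re

/-- Normalized conditional state on `Q⊗Q'` given `Ĉ = ĉ`. -/
def hcondSt (ρ : Matrix (Kh × (Q × Q')) (Kh × (Q × Q')) ℂ) (h : Kh) :
    Matrix (Q × Q') (Q × Q') ℂ :=
  ((hprob ρ h)⁻¹ : ℝ) • Matrix.of fun q q' => ρ (h, q) (h, q')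

/-- `G_{α,ρ}(f) = −H_α^{↑,f}(Q | Ĉ Q')_ρ
  = (α/(α−1)) log( Σ_{ĉ:ρ(ĉ)>0} ρ(ĉ) 2^{((α−1)/α)(f(ĉ) − H_α↑(Q|Q')_{ρ_{|ĉ}})} )`. -/
def Gfun (α : ℝ) (ρ : Matrix (Kh × (Q × Q')) (Kh × (Q × Q')) ℂ) (f : Kh → ℝ) : ℝ :=
  (α / (α - 1)) * Real.logb 2 (∑ h : Kh, if hprob ρ h = 0 then 0 else
    hprob ρ h * (2 : ℝ) ^ (((α - 1) / α) *
      (f h - (condHup (ENNReal.ofReal α) (hcondSt ρ h)).toReal)))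

/-- `G*_{α,ρ}(λ)`, equal to `(α/(α−1)) D(λ‖ρ_Ĉ) + Σ_{ĉ:ρ(ĉ)>0} λ(ĉ) H_α↑(Q|Q')_{ρ_{|ĉ}}`
when `λ` is a probability distribution on `𝒞̂` and `+∞` otherwise. -/
def Gstar (α : ℝ) (ρ : Matrix (Kh × (Q × Q')) (Kh × (Q × Q')) ℂ) (lam : Kh → ℝ) : EReal :=
  if (∀ h, 0 ≤ lam h) ∧ ∑ h, lam h = 1 then
    ((α / (α - 1) : ℝ) : EReal) * clD 1 lam (hprob ρ) +
      ((∑ h : Kh, if hprob ρ h = 0 then 0 else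
        lam h * (condHup (ENNReal.ofReal α) (hcondSt ρ h)).toReal : ℝ) : EReal)
  else ⊤

/-!
Put `β = (α - 1) / α` and `E ĉ = H_α↑(Q|Q')_{ρ_{|ĉ}}`. Then `G_{α,ρ}(f)` is `β⁻¹ log₂` of the
partition function `∑ ρ(ĉ) 2^{β (f ĉ - E ĉ)}`, and `G*_{α,ρ}(λ)` is the free energy
`β⁻¹ D(λ‖ρ_Ĉ) + ⟨λ, E⟩` of a probability vector `λ` supported in `supp ρ_Ĉ` (and `+∞` otherwise),
so the theorem is the Gibbs variational principle. For such `λ`,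
`⟨f, λ⟩ = G(f) + G*(λ) - β⁻¹ D(λ‖λ_f)`, where `λ_f ∝ ρ(ĉ) 2^{β (f ĉ - E ĉ)}` is the Gibbs
distribution of `f`: `D ≥ 0` gives Fenchel–Young, and `λ = λ_f` gives equality, so `G = (G*)*`.
Conversely, for admissible `λ` the supremum defining the conjugate of `G` is approached by
potentials whose Gibbs distributions put a weight `ε → 0` off `supp λ`. For any other `λ` some
direction `d` has `G (t • d) ≤ G 0 + t s` with `s < ⟨d, λ⟩`, so the supremum is `+∞`: take
`d = ±1` (as `G (f + c) = G f + c`), `d = -e_ĉ` (as `G` is monotone) or `d = e_ĉ` with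
`ĉ ∉ supp ρ_Ĉ` (which `G` ignores). Both functions are convex, as every convex conjugate is.
-/

section LegendreConj

variable {ι : Type*} [Fintype ι]

def legendreConj (F : (ι → ℝ) → EReal) (y : ι → ℝ) : EReal :=
  ⨆ x, ((∑ i, x i * y i : ℝ) : EReal) - F x

lemma top_le_mul_top_add_mul_top {t : ℝ} (ht0 : 0 ≤ t) (ht1 : t ≤ 1) :
    ⊤ ≤ (t : EReal) * ⊤ + ((1 - t : ℝ) : EReal) * ⊤ := by
  rcases ht0.eq_or_lt with rfl | ht
  · simp
  · rw [EReal.coe_mul_top_of_pos ht, EReal.top_add_of_ne_bot]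
    exact (mul_nonneg (EReal.coe_nonneg.2 (by linarith)) le_top).trans_lt' EReal.bot_lt_zero |>.ne'

lemma legendreConj_convex_comb_le (F : (ι → ℝ) → EReal) (x y : ι → ℝ) {t : ℝ}
    (ht0 : 0 ≤ t) (ht1 : t ≤ 1) :
    legendreConj F (t • x + (1 - t) • y) ≤
      (t : EReal) * legendreConj F x + ((1 - t : ℝ) : EReal) * legendreConj F y := by
  refine iSup_le fun f => ?_
  have hx := le_iSup (fun f => ((∑ i, f i * x i : ℝ) : EReal) - F f) f
  have hy := le_iSup (fun f => ((∑ i, f i * y i : ℝ) : EReal) - F f) f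
  generalize F f = v at hx hy ⊢
  induction v using EReal.rec with
  | bot =>
    rw [EReal.coe_sub_bot, top_le_iff] at hx hy
    rw [legendreConj, legendreConj, hx, hy, EReal.coe_sub_bot]
    exact top_le_mul_top_add_mul_top ht0 ht1
  | top => simp
  | coe r =>
    have hsplit : ∑ i, f i * (t • x + (1 - t) • y) i - r =
        t * (∑ i, f i * x i - r) + (1 - t) * (∑ i, f i * y i - r) := by
      simp only [Pi.add_apply, Pi.smul_apply, smul_eq_mul, mul_add, Finset.sum_add_distrib,
        mul_left_comm (f _), ← Finset.mul_sum]
      ring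
    rw [← EReal.coe_sub, hsplit, EReal.coe_add, EReal.coe_mul, EReal.coe_mul]
    rw [← EReal.coe_sub] at hx hy
    exact add_le_add (mul_le_mul_of_nonneg_left hx (EReal.coe_nonneg.2 ht0))
      (mul_le_mul_of_nonneg_left hy (EReal.coe_nonneg.2 (by linarith)))

lemma legendreConj_eq_top_of_recession {G : (ι → ℝ) → ℝ} {lam d : ι → ℝ} {s : ℝ}
    (hG : ∀ t, 0 ≤ t → G (t • d) ≤ G 0 + t * s) (hs : s < ∑ i, d i * lam i) :
    legendreConj (fun f => (G f : EReal)) lam = ⊤ := by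
  have hlin : ∀ t : ℝ, ∑ i, (t • d) i * lam i = t * ∑ i, d i * lam i := fun t => by
    simp only [Pi.smul_apply, smul_eq_mul, mul_assoc, ← Finset.mul_sum]
  have hlower : Tendsto (fun t : ℝ => t * (∑ i, d i * lam i - s) - G 0) atTop atTop :=
    tendsto_atTop_add_const_right _ _ (tendsto_id.atTop_mul_const (sub_pos.2 hs))
  have hdiv : Tendsto (fun t : ℝ => ∑ i, (t • d) i * lam i - G (t • d)) atTop atTop := by
    refine tendsto_atTop_mono' _ ((eventually_ge_atTop 0).mono fun t ht => ?_) hlower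
    simp only [hlin]
    linarith [hG t ht]
  refine top_le_iff.1 (le_of_tendsto' (EReal.tendsto_coe_atTop.comp hdiv) fun t => ?_)
  exact (EReal.coe_sub _ _).trans_le (le_iSup (fun f => ((∑ i, f i * lam i : ℝ) : EReal) - G f) _)

end LegendreConj

section GibbsVariational

open Topology

variable {ι : Type*} [Fintype ι] {β : ℝ} {p E f lam μ : ι → ℝ}

def partitionFn (β : ℝ) (p E f : ι → ℝ) : ℝ := ∑ i, p i * 2 ^ (β * (f i - E i))

def logPartitionFn (β : ℝ) (p E f : ι → ℝ) : ℝ := β⁻¹ * Real.logb 2 (partitionFn β p E f)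

def gibbsDist (β : ℝ) (p E f : ι → ℝ) (i : ι) : ℝ :=
  p i * 2 ^ (β * (f i - E i)) / partitionFn β p E f

def relEntropy (lam μ : ι → ℝ) : ℝ :=
  ∑ i, if lam i = 0 then 0 else lam i * Real.logb 2 (lam i / μ i)

def freeEnergy (β : ℝ) (p E lam : ι → ℝ) : ℝ := β⁻¹ * relEntropy lam p + ∑ i, lam i * E i

def freeEnergyExt (β : ℝ) (p E lam : ι → ℝ) : EReal :=
  if lam ∈ stdSimplex ℝ ι ∧ ∀ i, p i = 0 → lam i = 0 then (freeEnergy β p E lam : EReal) else ⊤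

lemma partitionFn_pos (hp : p ∈ stdSimplex ℝ ι) : 0 < partitionFn β p E f := by
  obtain ⟨i, -, hi⟩ := Finset.exists_ne_zero_of_sum_ne_zero (hp.2.symm ▸ one_ne_zero)
  exact Finset.sum_pos' (fun j _ => mul_nonneg (hp.1 j) (by positivity))
    ⟨i, Finset.mem_univ _, mul_pos ((hp.1 i).lt_of_ne' hi) (by positivity)⟩

lemma gibbsDist_mem_stdSimplex (hp : p ∈ stdSimplex ℝ ι) : gibbsDist β p E f ∈ stdSimplex ℝ ι :=
  ⟨fun i => div_nonneg (mul_nonneg (hp.1 i) (by positivity)) (partitionFn_pos hp).le, by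
    simp only [gibbsDist, ← Finset.sum_div]
    exact div_self (partitionFn_pos hp).ne'⟩

lemma gibbsDist_eq_zero_iff (hp : p ∈ stdSimplex ℝ ι) {i : ι} :
    gibbsDist β p E f i = 0 ↔ p i = 0 := by
  simp [gibbsDist, (partitionFn_pos hp).ne', (Real.rpow_pos_of_pos two_pos _).ne']

lemma relEntropy_self : relEntropy μ μ = 0 :=
  Finset.sum_eq_zero fun i _ => by split_ifs with h <;> simp [h]

lemma relEntropy_nonneg (hlam : lam ∈ stdSimplex ℝ ι) (hμ : μ ∈ stdSimplex ℝ ι)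
    (hsupp : ∀ i, μ i = 0 → lam i = 0) : 0 ≤ relEntropy lam μ := by
  have hlog2 : 0 ≤ Real.log 2 := Real.log_nonneg one_le_two
  have hterm : ∀ i, (lam i - μ i) / Real.log 2 ≤
      if lam i = 0 then 0 else lam i * Real.logb 2 (lam i / μ i) := by
    intro i
    split_ifs with h
    · rw [h, zero_sub]
      exact div_nonpos_of_nonpos_of_nonneg (neg_nonpos.2 (hμ.1 i)) hlog2
    · have hl : 0 < lam i := (hlam.1 i).lt_of_ne' h
      have hm : 0 < μ i := (hμ.1 i).lt_of_ne' fun h' => h (hsupp i h')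
      have hlog := Real.one_sub_inv_le_log_of_pos (div_pos hl hm)
      rw [inv_div] at hlog
      rw [Real.logb, mul_div_assoc']
      refine div_le_div_of_nonneg_right ?_ hlog2
      calc lam i - μ i = lam i * (1 - μ i / lam i) := by field_simp
        _ ≤ lam i * Real.log (lam i / μ i) := mul_le_mul_of_nonneg_left hlog hl.le
  calc 0 = ∑ i, (lam i - μ i) / Real.log 2 := by
        rw [← Finset.sum_div, Finset.sum_sub_distrib, hlam.2, hμ.2, sub_self, zero_div]
    _ ≤ relEntropy lam μ := Finset.sum_le_sum fun i _ => hterm i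

lemma sum_mul_eq_logPartitionFn_add_freeEnergy_sub (hβ : β ≠ 0) (hp : p ∈ stdSimplex ℝ ι)
    (hlam : ∑ i, lam i = 1) (hsupp : ∀ i, p i = 0 → lam i = 0) :
    ∑ i, f i * lam i = logPartitionFn β p E f + freeEnergy β p E lam -
      β⁻¹ * relEntropy lam (gibbsDist β p E f) := by
  have hZ : 0 < partitionFn β p E f := partitionFn_pos hp
  have hterm : ∀ i, f i * lam i = lam i * logPartitionFn β p E f +
      β⁻¹ * (if lam i = 0 then 0 else lam i * Real.logb 2 (lam i / p i)) + lam i * E i -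
      β⁻¹ * (if lam i = 0 then 0 else lam i * Real.logb 2 (lam i / gibbsDist β p E f i)) := by
    intro i
    split_ifs with h
    · simp [h]
    · have hpi : 0 < p i := (hp.1 i).lt_of_ne' fun h' => h (hsupp i h')
      have h2 : 0 < (2 : ℝ) ^ (β * (f i - E i)) := by positivity
      rw [gibbsDist, logPartitionFn, Real.logb_div h hpi.ne', Real.logb_div h (by positivity),
        Real.logb_div (by positivity) hZ.ne', Real.logb_mul hpi.ne' h2.ne',
        Real.logb_rpow two_pos one_lt_two.ne']
      field_simp
      ring
  rw [Finset.sum_congr rfl fun i _ => hterm i]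
  simp only [Finset.sum_sub_distrib, Finset.sum_add_distrib, ← Finset.mul_sum, ← Finset.sum_mul,
    hlam, freeEnergy, relEntropy]
  ring

theorem sum_mul_le_logPartitionFn_add_freeEnergy (hβ : 0 < β) (hp : p ∈ stdSimplex ℝ ι)
    (hlam : lam ∈ stdSimplex ℝ ι) (hsupp : ∀ i, p i = 0 → lam i = 0) :
    ∑ i, f i * lam i ≤ logPartitionFn β p E f + freeEnergy β p E lam := by
  rw [sum_mul_eq_logPartitionFn_add_freeEnergy_sub hβ.ne' hp hlam.2 hsupp]
  have hD := relEntropy_nonneg hlam (gibbsDist_mem_stdSimplex (β := β) (E := E) (f := f) hp)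
    fun i hi => hsupp i ((gibbsDist_eq_zero_iff hp).1 hi)
  exact sub_le_self _ (mul_nonneg (inv_nonneg.2 hβ.le) hD)

theorem sum_mul_gibbsDist (hβ : β ≠ 0) (hp : p ∈ stdSimplex ℝ ι) :
    ∑ i, f i * gibbsDist β p E f i =
      logPartitionFn β p E f + freeEnergy β p E (gibbsDist β p E f) := by
  rw [sum_mul_eq_logPartitionFn_add_freeEnergy_sub hβ hp (gibbsDist_mem_stdSimplex hp).2
    fun i => (gibbsDist_eq_zero_iff hp).2, relEntropy_self, mul_zero, sub_zero]

lemma logPartitionFn_add_const (hβ : β ≠ 0) (hp : p ∈ stdSimplex ℝ ι) (c : ℝ) :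
    logPartitionFn β p E (fun i => f i + c) = logPartitionFn β p E f + c := by
  have hZ : partitionFn β p E (fun i => f i + c) = 2 ^ (β * c) * partitionFn β p E f := by
    simp only [partitionFn, Finset.mul_sum]
    refine Finset.sum_congr rfl fun i _ => ?_
    rw [show β * (f i + c - E i) = β * c + β * (f i - E i) by ring, Real.rpow_add two_pos]
    ring
  rw [logPartitionFn, logPartitionFn, hZ, Real.logb_mul (by positivity) (partitionFn_pos hp).ne',
    Real.logb_rpow two_pos one_lt_two.ne']
  field_simp
  ring

lemma logPartitionFn_mono (hβ : 0 < β) (hp : p ∈ stdSimplex ℝ ι) :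
    Monotone (logPartitionFn β p E) := fun f g hfg =>
  mul_le_mul_of_nonneg_left (Real.logb_le_logb_of_le one_lt_two (partitionFn_pos hp)
    (Finset.sum_le_sum fun i _ => mul_le_mul_of_nonneg_left (Real.rpow_le_rpow_of_exponent_le
      one_le_two (by nlinarith [hfg i])) (hp.1 i))) (inv_nonneg.2 hβ.le)

lemma logPartitionFn_congr {g : ι → ℝ} (h : ∀ i, p i ≠ 0 → f i = g i) :
    logPartitionFn β p E f = logPartitionFn β p E g := by
  simp only [logPartitionFn, partitionFn]
  congr 2
  refine Finset.sum_congr rfl fun i _ => ?_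
  by_cases hi : p i = 0
  · simp [hi]
  · rw [h i hi]

lemma legendreConj_logPartitionFn_eq_top (hβ : 0 < β) (hp : p ∈ stdSimplex ℝ ι)
    (h : ¬(lam ∈ stdSimplex ℝ ι ∧ ∀ i, p i = 0 → lam i = 0)) :
    legendreConj (fun f => (logPartitionFn β p E f : EReal)) lam = ⊤ := by
  have hconst (c t : ℝ) : logPartitionFn β p E (t • fun _ => c) =
      logPartitionFn β p E 0 + t * c := by
    rw [show (t • fun _ : ι => c) = fun i => (0 : ι → ℝ) i + t * c by ext; simp]
    exact logPartitionFn_add_const hβ.ne' hp (t * c)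
  rcases lt_trichotomy (∑ i, lam i) 1 with hlt | heq | hgt
  · refine legendreConj_eq_top_of_recession (d := fun _ => -1) (s := -1)
      (fun t _ => (hconst (-1) t).le) ?_
    simpa using hlt
  · by_cases hneg : ∃ i, lam i < 0
    · obtain ⟨i, hi⟩ := hneg
      refine legendreConj_eq_top_of_recession (d := Pi.single i (-1)) (s := 0)
        (fun t ht => ?_) (by simp [Pi.single_apply]; linarith)
      rw [mul_zero, add_zero]
      refine logPartitionFn_mono hβ hp fun j => ?_
      by_cases hj : j = i
      · subst hj; simpa using ht
      · simp [hj]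
    · push Not at hneg
      have hsupp : ¬∀ i, p i = 0 → lam i = 0 := fun hs => h ⟨⟨hneg, heq⟩, hs⟩
      push Not at hsupp
      obtain ⟨i, hpi, hli⟩ := hsupp
      refine legendreConj_eq_top_of_recession (d := Pi.single i 1) (s := 0)
        (fun t _ => (logPartitionFn_congr fun j hj => ?_).le.trans_eq (by ring))
        (by simpa [Pi.single_apply] using (hneg i).lt_of_ne' hli)
      have hji : j ≠ i := fun hji => hj (hji ▸ hpi)
      simp [hji]
  · refine legendreConj_eq_top_of_recession (d := fun _ => 1) (s := 1)
      (fun t _ => (hconst 1 t).le) ?_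
    simpa using hgt

lemma tendsto_sum_mul_sub_logPartitionFn (hβ : β ≠ 0) (hp : ∀ i, 0 ≤ p i)
    (hlam : lam ∈ stdSimplex ℝ ι) (hsupp : ∀ i, p i = 0 → lam i = 0) :
    ∃ f : ℝ → ι → ℝ, Tendsto (fun ε => ∑ i, f ε i * lam i - logPartitionFn β p E (f ε))
      (𝓝[>] 0) (𝓝 (freeEnergy β p E lam)) := by
  -- the Gibbs weights of `f ε` are `lam` on `supp lam` and `ε • p` off it
  set w : ℝ → ι → ℝ := fun ε i => if lam i = 0 then ε else lam i / p i
  refine ⟨fun ε i => E i + β⁻¹ * Real.logb 2 (w ε i), ?_⟩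
  have hlin (ε : ℝ) : ∑ i, (E i + β⁻¹ * Real.logb 2 (w ε i)) * lam i = freeEnergy β p E lam := by
    rw [freeEnergy, relEntropy, Finset.mul_sum, ← Finset.sum_add_distrib]
    refine Finset.sum_congr rfl fun i _ => ?_
    by_cases h : lam i = 0
    · simp [w, h]
    · simp only [w, h, if_false]
      ring
  have hZ : ∀ ε > 0, partitionFn β p E (fun i => E i + β⁻¹ * Real.logb 2 (w ε i)) =
      ∑ i, if lam i = 0 then p i * ε else lam i := fun ε hε => by
    refine Finset.sum_congr rfl fun i _ => ?_
    rw [show β * (E i + β⁻¹ * Real.logb 2 (w ε i) - E i) = Real.logb 2 (w ε i) by field_simp; ring]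
    by_cases h : lam i = 0
    · simp only [w, h, if_true, Real.rpow_logb two_pos one_lt_two.ne' hε]
    · have hpi : 0 < p i := (hp i).lt_of_ne' fun h' => h (hsupp i h')
      have hl : 0 < lam i := (hlam.1 i).lt_of_ne' h
      simp only [w, h, if_false, Real.rpow_logb two_pos one_lt_two.ne' (div_pos hl hpi)]
      field_simp
  have hZlim : Tendsto (fun ε => ∑ i, if lam i = 0 then p i * ε else lam i) (𝓝[>] 0) (𝓝 1) := by
    have hcont : Continuous fun ε : ℝ => ∑ i, if lam i = 0 then p i * ε else lam i :=
      continuous_finsetSum _ fun i _ => by split_ifs <;> fun_prop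
    convert hcont.tendsto 0 |>.mono_left nhdsWithin_le_nhds using 2
    rw [← hlam.2]
    exact Finset.sum_congr rfl fun i _ => by split_ifs with h <;> simp [h]
  have hL : Tendsto (fun ε => logPartitionFn β p E fun i => E i + β⁻¹ * Real.logb 2 (w ε i))
      (𝓝[>] 0) (𝓝 0) := by
    have hlog := ((Real.continuousAt_logb (b := 2) one_ne_zero).tendsto.comp
      hZlim).const_mul β⁻¹
    rw [Real.logb_one, mul_zero] at hlog
    refine hlog.congr' (eventually_mem_nhdsWithin.mono fun ε hε => ?_)
    simp only [Function.comp_apply, logPartitionFn, hZ ε hε]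
  simpa [hlin] using tendsto_const_nhds.sub hL

theorem legendreConj_logPartitionFn (hβ : 0 < β) (hp : p ∈ stdSimplex ℝ ι) :
    legendreConj (fun f => (logPartitionFn β p E f : EReal)) = freeEnergyExt β p E := by
  funext lam
  by_cases h : lam ∈ stdSimplex ℝ ι ∧ ∀ i, p i = 0 → lam i = 0
  · rw [freeEnergyExt, if_pos h]
    obtain ⟨f, hf⟩ := tendsto_sum_mul_sub_logPartitionFn (E := E) hβ.ne' hp.1 h.1 h.2
    refine le_antisymm (iSup_le fun g => ?_) (le_of_tendsto' (EReal.tendsto_coe.2 hf) fun ε => ?_)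
    · rw [← EReal.coe_sub, EReal.coe_le_coe_iff, sub_le_iff_le_add']
      exact sum_mul_le_logPartitionFn_add_freeEnergy hβ hp h.1 h.2
    · exact (EReal.coe_sub _ _).trans_le
        (le_iSup (fun g => ((∑ i, g i * lam i : ℝ) : EReal) - logPartitionFn β p E g) (f ε))
  · rw [freeEnergyExt, if_neg h, legendreConj_logPartitionFn_eq_top hβ hp h]

theorem legendreConj_freeEnergyExt (hβ : 0 < β) (hp : p ∈ stdSimplex ℝ ι) :
    legendreConj (freeEnergyExt β p E) = fun f => (logPartitionFn β p E f : EReal) := by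
  funext f
  have hcomm (lam : ι → ℝ) : ∑ i, lam i * f i = ∑ i, f i * lam i :=
    Finset.sum_congr rfl fun i _ => mul_comm _ _
  refine le_antisymm (iSup_le fun lam => ?_) ?_
  · rw [freeEnergyExt]
    split_ifs with h
    · rw [← EReal.coe_sub, EReal.coe_le_coe_iff, sub_le_iff_le_add, hcomm]
      exact sum_mul_le_logPartitionFn_add_freeEnergy hβ hp h.1 h.2
    · rw [EReal.sub_top]
      exact bot_le
  · refine le_iSup_of_le (gibbsDist β p E f) ?_
    rw [freeEnergyExt, if_pos ⟨gibbsDist_mem_stdSimplex hp, fun i => (gibbsDist_eq_zero_iff hp).2⟩,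
      ← EReal.coe_sub, EReal.coe_le_coe_iff, hcomm, sum_mul_gibbsDist hβ.ne' hp,
      add_sub_cancel_right]

end GibbsVariational

def hcondHup (α : ℝ) (ρ : Matrix (Kh × (Q × Q')) (Kh × (Q × Q')) ℂ) (h : Kh) : ℝ :=
  (condHup (ENNReal.ofReal α) (hcondSt ρ h)).toReal

section GfunGstar

variable {K X Y : Type*} [Fintype K] [Fintype X] [Fintype Y]

lemma hprob_mem_stdSimplex {ρ : Matrix (K × (X × Y)) (K × (X × Y)) ℂ} (hρ : IsState ρ) :
    hprob ρ ∈ stdSimplex ℝ K := by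
  refine ⟨fun h => ?_, ?_⟩
  · rw [hprob, Complex.re_sum]
    exact Finset.sum_nonneg fun q _ => (Complex.nonneg_iff.1 hρ.1.diag_nonneg).1
  · have htr : ∑ z, ρ z z = 1 := hρ.2
    rw [Fintype.sum_prod_type] at htr
    simp only [hprob, ← Complex.re_sum, htr, Complex.one_re]

variable [DecidableEq X] [DecidableEq Y]

lemma Gfun_eq_logPartitionFn (α : ℝ) (ρ : Matrix (K × (X × Y)) (K × (X × Y)) ℂ) :
    Gfun α ρ = logPartitionFn ((α - 1) / α) (hprob ρ) (hcondHup α ρ) := by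
  funext f
  rw [Gfun, logPartitionFn, partitionFn, inv_div]
  congr 2
  refine Finset.sum_congr rfl fun h _ => ?_
  split_ifs with h0 <;> simp [h0, hcondHup]

lemma Gstar_eq_freeEnergyExt {α : ℝ} (hα : 1 < α) (ρ : Matrix (K × (X × Y)) (K × (X × Y)) ℂ) :
    Gstar α ρ = freeEnergyExt ((α - 1) / α) (hprob ρ) (hcondHup α ρ) := by
  funext lam
  rw [Gstar, freeEnergyExt]
  by_cases hs : (∀ h, 0 ≤ lam h) ∧ ∑ h, lam h = 1
  · rw [if_pos hs]
    by_cases hsupp : ∀ h, hprob ρ h = 0 → lam h = 0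
    · rw [if_pos ⟨hs, hsupp⟩, clD, if_pos rfl, if_pos hsupp, hs.2, div_one, freeEnergy,
        inv_div, ← EReal.coe_mul, ← EReal.coe_add]
      congr 2
      refine Finset.sum_congr rfl fun h _ => ?_
      split_ifs with h0 <;> simp [h0, hsupp h, hcondHup]
    · rw [if_neg fun h => hsupp h.2, clD, if_pos rfl, if_neg hsupp,
        EReal.coe_mul_top_of_pos (div_pos (by linarith) (by linarith)), EReal.top_add_coe]
  · rw [if_neg hs, if_neg fun h => hs h.1]

end GfunGstar

theorem fweighted_convex_conjugate_pair_general
    (α : ℝ) (hα : 1 < α)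
    (ρ : Matrix (Kh × (Q × Q')) (Kh × (Q × Q')) ℂ) (hρ : IsState ρ) :
    ConvexOn ℝ Set.univ (Gfun α ρ) ∧
    (∀ x y : Kh → ℝ, ∀ t : ℝ, 0 ≤ t → t ≤ 1 →
      Gstar α ρ (t • x + (1 - t) • y) ≤
        ((t : ℝ) : EReal) * Gstar α ρ x + ((1 - t : ℝ) : EReal) * Gstar α ρ y) ∧
    (∀ lam : Kh → ℝ,
      (⨆ f : Kh → ℝ, (((∑ h, f h * lam h) - Gfun α ρ f : ℝ) : EReal)) = Gstar α ρ lam) ∧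
    (∀ f : Kh → ℝ,
      (⨆ lam : Kh → ℝ, (((∑ h, f h * lam h : ℝ) : EReal) - Gstar α ρ lam)) =
        ((Gfun α ρ f : ℝ) : EReal)) := by
  rw [Gfun_eq_logPartitionFn, Gstar_eq_freeEnergyExt hα]
  set β := (α - 1) / α
  set E := hcondHup α ρ
  have hβ : 0 < β := div_pos (by linarith) (by linarith)
  have hp := hprob_mem_stdSimplex hρ
  have hconj := legendreConj_logPartitionFn (E := E) hβ hp
  have hconj' := legendreConj_freeEnergyExt (E := E) hβ hp
  refine ⟨⟨convex_univ, fun x _ y _ a b ha hb hab => ?_⟩, fun x y t ht0 ht1 => ?_,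
    fun lam => ?_, fun f => ?_⟩
  · obtain rfl : b = 1 - a := by linarith
    have h := legendreConj_convex_comb_le (freeEnergyExt β (hprob ρ) E) x y ha (by linarith)
    simp only [hconj'] at h
    simp only [smul_eq_mul]
    exact_mod_cast h
  · rw [← hconj]
    exact legendreConj_convex_comb_le _ x y ht0 ht1
  · rw [← hconj]
    simp only [legendreConj, EReal.coe_sub]
  · have h := congrFun hconj' f
    simp only [legendreConj] at h
    rw [← h]
    simp only [mul_comm]

/-- **Convex-conjugate pair for `f`-weighted Rényi entropies** (Lemma 5.1): for
`α ∈ (1,∞)` and a normalized state `ρ` on `Q⊗Q'⊗Ĉ` classical on `Ĉ`, the functions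
`G_{α,ρ}` and `G*_{α,ρ}` are both convex, and each is the Legendre–Fenchel convex
conjugate of the other. -/
theorem fweighted_convex_conjugate_pair
    (α : ℝ) (hα : 1 < α)
    (ρ : Matrix (Kh × (Q × Q')) (Kh × (Q × Q')) ℂ) (hρ : IsState ρ)
    (hclass : IsClassicalAlong (fun x => x.1) ρ) :
    ConvexOn ℝ Set.univ (Gfun α ρ) ∧
    (∀ x y : Kh → ℝ, ∀ t : ℝ, 0 ≤ t → t ≤ 1 →
      Gstar α ρ (t • x + (1 - t) • y) ≤
        ((t : ℝ) : EReal) * Gstar α ρ x + ((1 - t : ℝ) : EReal) * Gstar α ρ y) ∧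
    (∀ lam : Kh → ℝ,
      (⨆ f : Kh → ℝ, (((∑ h, f h * lam h) - Gfun α ρ f : ℝ) : EReal)) = Gstar α ρ lam) ∧
    (∀ f : Kh → ℝ,
      (⨆ lam : Kh → ℝ, (((∑ h, f h * lam h : ℝ) : EReal) - Gstar α ρ lam)) =
        ((Gfun α ρ f : ℝ) : EReal)) :=
  fweighted_convex_conjugate_pair_general α hα ρ hρ

end Conjugate

end QIT
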